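/- arXiv:1409.5027 — 2 statements merged into one kernel-verified Lean document; each statement's English description precedes it below -/
import Mathlib

section
/- Let p be a prime and G a subgroup of K_p. Say that the action of G is uniserial if for every n ≥ 0 the ZMod p-linear span of the set ⋃_{g ∈ G} {f ∘ g⁻¹ − f : f ∈ U_{n+1}} equals U_n. Then the action of G is uniserial if and only if for every k ≥ 0 there exists g ∈ G with α_k(g) ≠ 0, i.e., every homomorphism α_k : G → ZMod p is nonzero. -/
/-- The triangular-form predicate defining the group `K_p`. -/
def IsTriangular (p : ℕ) (g : Equiv.Perm (ℕ → ZMod p)) : Prop :=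
  ∃ a : (n : ℕ) → (Fin n → ZMod p) → ZMod p,
    ∀ (x : ℕ → ZMod p) (n : ℕ), g x n = x n + a n (fun i : Fin n => x (i : ℕ))

/-- Extend a word `v ∈ (ZMod p)^n` to an infinite sequence by zeros. -/
def extendWord {p : ℕ} (n : ℕ) (v : Fin n → ZMod p) : ℕ → ZMod p :=
  fun i => if h : i < n then v ⟨i, h⟩ else 0

/-- `α_n(g) = Σ_{v ∈ (ZMod p)^n} a_n(v)`, computed from the action of `g`
(for triangular `g`, `a_n(v) = (g x̂)_n − x̂_n` for any extension `x̂` of `v`). -/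
noncomputable def alphaKal (p : ℕ) [NeZero p] (g : Equiv.Perm (ℕ → ZMod p)) (n : ℕ) :
    ZMod p :=
  ∑ v : Fin n → ZMod p, (g (extendWord n v) n - extendWord n v n)

/-- The Kaloujnine monomial `e_n(x) = Π_i x_i^{k_i}`, where `k_0, k_1, …` are the base-`p`
digits of `n`. -/
def kalMonomial (p n : ℕ) : (ℕ → ZMod p) → ZMod p :=
  fun x => ∏ i ∈ Finset.range (n + 1), x i ^ (n / p ^ i % p)

/-- `U_n`: the `ZMod p`-linear span of the monomials `e_0, e_1, …, e_n`. -/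
def Uspan (p n : ℕ) : Submodule (ZMod p) ((ℕ → ZMod p) → ZMod p) :=
  Submodule.span (ZMod p) (kalMonomial p '' {m : ℕ | m ≤ n})

/-! For `m < p ^ N` the functional `kalDual p N m`, `h ↦ ∑_v h v * ∏_i v_i ^ (p - 1 - m_i)` with
`m_i` the base-`p` digits of `m`, sends `e_m` to `(-1) ^ N` and kills `e_{m'}` for `m' < m`; so
`e_0, …, e_{p^N - 1}` form a basis of the functions of `x_0, …, x_{N-1}`, and membership in `U_t`
is detected by these functionals. For triangular `g`, `kalDual p N m (e_B ∘ g)` is computed by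
summing out the coordinates from the last one down, which leaves one-variable power sums
`∑_t (t + c) ^ K * t ^ L` over `ZMod p`; these vanish when `K + L < p - 1`. Hence `e_B ∘ g - e_B`
has no component on `e_m` for `m ≥ B`, i.e. lies in `U_{B-1}`, while its coefficient on `e_{B-1}`
is a nonzero multiple of `α_j(g)`, where `p ^ j` is the exact power of `p` dividing `B`.
By induction on `n`, `e_n` then lies in the span for `U_{n+1}` exactly when some `α_j(g) ≠ 0`,
and `B = p ^ k` gives `j = k`.
-/

open Finset

section Digits

def digit (p m i : ℕ) : ℕ := m / p ^ i % p

variable {p : ℕ}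

lemma digit_lt (hp : 0 < p) (m i : ℕ) : digit p m i < p := Nat.mod_lt _ hp

lemma digit_eq_zero_of_lt_pow {m i : ℕ} (h : m < p ^ i) : digit p m i = 0 := by
  simp [digit, Nat.div_eq_of_lt h]

lemma digit_succ (m i : ℕ) : digit p m (i + 1) = digit p (m / p) i := by
  rw [digit, digit, Nat.div_div_eq_div_mul, ← pow_succ']

lemma exists_digit_lt_of_lt (hp : 1 < p) {A B : ℕ} (h : A < B) :
    ∃ i, digit p A i < digit p B i ∧ ∀ t, i < t → digit p A t = digit p B t := by
  induction B using Nat.strong_induction_on generalizing A with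
  | _ B ih =>
    by_cases hdiv : A / p = B / p
    · refine ⟨0, ?_, fun t ht => ?_⟩
      · have := Nat.div_add_mod A p
        have := Nat.div_add_mod B p
        simp only [digit, pow_zero, Nat.div_one]
        rw [hdiv] at *
        omega
      · obtain ⟨s, rfl⟩ := Nat.exists_eq_add_of_lt ht
        rw [zero_add, digit_succ, digit_succ, hdiv]
    · have hlt : A / p < B / p := (Nat.div_le_div_right h.le).lt_of_ne hdiv
      obtain ⟨i, hi, hgt⟩ := ih (B / p) (Nat.div_lt_self (by omega) hp) hlt
      refine ⟨i + 1, by rwa [digit_succ, digit_succ], fun t ht => ?_⟩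
      obtain ⟨s, rfl⟩ : ∃ s, t = s + 1 := ⟨t - 1, by omega⟩
      rw [digit_succ, digit_succ]
      exact hgt _ (by omega)

lemma lt_pow_add_one (hp : 1 < p) (n : ℕ) : n < p ^ (n + 1) :=
  (Nat.lt_pow_self hp).trans' n.lt_succ_self

lemma add_one_div_pow (hp : p.Prime) (n i : ℕ) :
    (n + 1) / p ^ i = n / p ^ i + if i ≤ (n + 1).factorization p then 1 else 0 := by
  simp only [Nat.succ_div, hp.pow_dvd_iff_le_factorization n.add_one_ne_zero]

lemma add_one_mod_cases (hp : 1 < p) (a : ℕ) :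
    (a + 1) % p = 0 ∧ a % p = p - 1 ∨ (a + 1) % p = a % p + 1 := by
  have h := @Nat.add_mod_eq_ite p a 1
  have := Nat.mod_lt a (by omega : 0 < p)
  rw [Nat.one_mod_eq_one.2 (by omega)] at h
  split_ifs at h <;> omega

lemma digit_eq_of_lt_factorization (hp : p.Prime) {n i : ℕ} (hi : i < (n + 1).factorization p) :
    digit p (n + 1) i = 0 ∧ digit p n i = p - 1 := by
  have hdvd : p ∣ (n + 1) / p ^ i := Nat.dvd_div_of_mul_dvd <| by
    rw [← pow_succ]
    exact (hp.pow_dvd_iff_le_factorization n.add_one_ne_zero).2 hi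
  rw [add_one_div_pow hp, if_pos hi.le] at hdvd
  rw [digit, digit, add_one_div_pow hp, if_pos hi.le]
  have := Nat.mod_eq_zero_of_dvd hdvd
  rcases add_one_mod_cases hp.one_lt (n / p ^ i) with h | h <;> omega

lemma digit_factorization (hp : p.Prime) (n : ℕ) :
    digit p (n + 1) ((n + 1).factorization p) ≠ 0 ∧
      digit p n ((n + 1).factorization p) + 1 = digit p (n + 1) ((n + 1).factorization p) := by
  have hndvd := Nat.not_dvd_ordCompl hp n.add_one_ne_zero
  rw [add_one_div_pow hp, if_pos le_rfl] at hndvd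
  rw [digit, digit, add_one_div_pow hp, if_pos le_rfl]
  rcases add_one_mod_cases hp.one_lt (n / p ^ (n + 1).factorization p) with h | h
  · exact absurd (Nat.dvd_of_mod_eq_zero h.1) hndvd
  · omega

lemma digit_eq_of_factorization_lt (hp : p.Prime) {n i : ℕ} (hi : (n + 1).factorization p < i) :
    digit p n i = digit p (n + 1) i := by
  rw [digit, digit, add_one_div_pow hp, if_neg (by omega), add_zero]

end Digits

section Monomials

variable {p : ℕ}

lemma prod_range_pow_digit_eq {M : Type*} [CommMonoid M] (hp : 1 < p) {m N L : ℕ}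
    (hm : m < p ^ N) (hNL : N ≤ L) (x : ℕ → M) :
    ∏ i ∈ range L, x i ^ digit p m i = ∏ i ∈ range N, x i ^ digit p m i := by
  refine (prod_subset (range_subset_range.2 hNL) fun i _ hi => ?_).symm
  rw [digit_eq_zero_of_lt_pow (hm.trans_le (Nat.pow_le_pow_right (by omega) (by simpa using hi))),
    pow_zero]

lemma kalMonomial_eq_prod (hp : 1 < p) {m N : ℕ} (hm : m < p ^ N) (x : ℕ → ZMod p) :
    kalMonomial p m x = ∏ i ∈ range N, x i ^ digit p m i := by
  have hm' : m < p ^ (m + 1) := (Nat.lt_succ_self m).trans (Nat.lt_pow_self hp)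
  rw [← prod_range_pow_digit_eq hp hm (le_max_right (m + 1) N),
    prod_range_pow_digit_eq hp hm' (le_max_left (m + 1) N)]
  rfl

lemma kalMonomial_mem_Uspan {m n : ℕ} (h : m ≤ n) : kalMonomial p m ∈ Uspan p n :=
  Submodule.subset_span ⟨m, h, rfl⟩

lemma Uspan_mono {m n : ℕ} (h : m ≤ n) : Uspan p m ≤ Uspan p n :=
  Submodule.span_mono (Set.image_mono fun _ hk => le_trans hk h)

end Monomials

section PowerSums

variable {p : ℕ} [Fact p.Prime]

lemma sum_pow_eq_zero_of_lt {e : ℕ} (he : e < p - 1) : ∑ t : ZMod p, t ^ e = 0 :=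
  FiniteField.sum_pow_lt_card_sub_one (ZMod p) e (by rwa [ZMod.card])

lemma sum_pow_sub_one : ∑ t : ZMod p, t ^ (p - 1) = -1 := by
  simp [ZMod.pow_card_sub_one, Finset.sum_ite, Finset.filter_ne', Finset.card_erase_of_mem,
    Nat.cast_sub (Fact.out : p.Prime).one_le]

lemma sum_add_pow_mul_pow (K L : ℕ) (c : ZMod p) :
    ∑ t : ZMod p, (t + c) ^ K * t ^ L =
      ∑ s ∈ range (K + 1), c ^ (K - s) * K.choose s * ∑ t : ZMod p, t ^ (s + L) := by
  simp_rw [add_pow, sum_mul, mul_sum]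
  rw [sum_comm]
  refine sum_congr rfl fun s _ => sum_congr rfl fun t _ => by ring

lemma sum_add_pow_mul_pow_eq_zero {K L : ℕ} (h : K + L < p - 1) (c : ZMod p) :
    ∑ t : ZMod p, (t + c) ^ K * t ^ L = 0 := by
  rw [sum_add_pow_mul_pow]
  refine sum_eq_zero fun s hs => ?_
  rw [sum_pow_eq_zero_of_lt (by simp at hs; omega), mul_zero]

lemma sum_add_pow_mul_pow_eq_neg_one {K L : ℕ} (h : K + L = p - 1) (c : ZMod p) :
    ∑ t : ZMod p, (t + c) ^ K * t ^ L = -1 := by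
  rw [sum_add_pow_mul_pow, sum_range_succ, sum_eq_zero fun s hs => ?_, h, sum_pow_sub_one]
  · simp
  · rw [sum_pow_eq_zero_of_lt (by simp at hs; omega), mul_zero]

/-- Only the terms `s = K` (independent of `c`) and `s = K - 1` (linear in `c`) of the binomial
expansion survive the summation over `t`. -/
lemma sum_add_pow_mul_pow_sub_sum_pow {K L : ℕ} (hK : 0 < K) (h : K + L = p) (c : ZMod p) :
    ∑ t : ZMod p, (t + c) ^ K * t ^ L - ∑ t : ZMod p, t ^ (K + L) = -(K * c) := by
  obtain ⟨k, rfl⟩ : ∃ k, K = k + 1 := ⟨K - 1, by omega⟩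
  rw [sum_add_pow_mul_pow, sum_range_succ, sum_range_succ, sum_eq_zero fun s hs => ?_,
    show k + L = p - 1 by omega, sum_pow_sub_one]
  · simp [Nat.choose_succ_self_right]
    ring
  · rw [sum_pow_eq_zero_of_lt (by simp at hs; omega), mul_zero]

end PowerSums

section TriangularSums

variable {p : ℕ}

/-- `IsTriangular p g` unfolds to `∃ b, HasTableau g b`. -/
def HasTableau (τ : (ℕ → ZMod p) → ℕ → ZMod p) (b : (n : ℕ) → (Fin n → ZMod p) → ZMod p) :
    Prop :=
  ∀ x n, τ x n = x n + b n fun i : Fin n => x i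

lemma hasTableau_id : HasTableau (p := p) id fun _ _ => 0 := fun _ _ => (add_zero _).symm

variable {τ : (ℕ → ZMod p) → ℕ → ZMod p} {b : (n : ℕ) → (Fin n → ZMod p) → ZMod p}

lemma HasTableau.apply_eq_of_forall_le (hτ : HasTableau τ b) {x y : ℕ → ZMod p} {n : ℕ}
    (h : ∀ i ≤ n, x i = y i) : τ x n = τ y n := by
  rw [hτ, hτ, h n le_rfl]
  congr 2
  exact funext fun i => h i i.isLt.le

lemma extendWord_snoc {N : ℕ} (u : Fin N → ZMod p) (t : ZMod p) :
    extendWord (N + 1) (Fin.snoc u t) = Function.update (extendWord N u) N t := by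
  funext i
  rcases lt_trichotomy i N with hi | rfl | hi
  · simp [extendWord, hi, hi.ne, Nat.lt_succ_of_lt hi, Fin.snoc, Fin.castLT]
  · simp [extendWord, Fin.snoc]
  · simp [extendWord, hi.ne', hi.not_gt, (Nat.succ_le_of_lt hi).not_gt]

lemma extendWord_apply_fin {N : ℕ} (u : Fin N → ZMod p) :
    (fun i : Fin N => extendWord N u i) = u :=
  funext fun i => dif_pos i.isLt

section

variable [NeZero p]

def triangularSum (τ : (ℕ → ZMod p) → ℕ → ZMod p) (K L : ℕ → ℕ) (N : ℕ) : ZMod p :=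
  ∑ v : Fin N → ZMod p, ∏ i ∈ range N, τ (extendWord N v) i ^ K i * extendWord N v i ^ L i

lemma triangularSum_zero (K L : ℕ → ℕ) : triangularSum τ K L 0 = 1 := by
  simp [triangularSum]

lemma triangularSum_succ (hτ : HasTableau τ b) (K L : ℕ → ℕ) (N : ℕ) :
    triangularSum τ K L (N + 1) =
      ∑ u : Fin N → ZMod p,
        (∏ i ∈ range N, τ (extendWord N u) i ^ K i * extendWord N u i ^ L i) *
          ∑ t : ZMod p, (t + b N u) ^ K N * t ^ L N := by
  rw [triangularSum, ← (Fin.snocEquiv fun _ => ZMod p).sum_comp, Fintype.sum_prod_type_right]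
  refine sum_congr rfl fun u _ => ?_
  rw [mul_sum]
  refine sum_congr rfl fun t _ => ?_
  rw [show (Fin.snocEquiv fun _ => ZMod p) (t, u) = Fin.snoc u t from rfl, extendWord_snoc,
    prod_range_succ, hτ _ N]
  congr 1
  · refine prod_congr rfl fun i hi => ?_
    have hi : i < N := mem_range.1 hi
    rw [Function.update_of_ne hi.ne, hτ.apply_eq_of_forall_le fun k hk =>
      Function.update_of_ne (show k ≠ N by omega) t (extendWord N u)]
  · have hprefix : (fun i : Fin N => Function.update (extendWord N u) N t i) = u :=
      (funext fun i => Function.update_of_ne i.isLt.ne _ _).trans (extendWord_apply_fin u)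
    rw [hprefix, Function.update_self]

end

variable [Fact p.Prime]

lemma triangularSum_eq_neg_one_pow_mul (hτ : HasTableau τ b) {K L : ℕ → ℕ} {j N : ℕ}
    (hjN : j ≤ N) (h : ∀ i, j ≤ i → i < N → K i + L i = p - 1) :
    triangularSum τ K L N = (-1) ^ (N - j) * triangularSum τ K L j := by
  induction N, hjN using Nat.le_induction with
  | base => simp
  | succ N hjN ih =>
    rw [triangularSum_succ hτ]
    simp_rw [sum_add_pow_mul_pow_eq_neg_one (h N hjN N.lt_succ_self)]
    rw [← sum_mul]
    change triangularSum τ K L N * _ = _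
    rw [ih fun i hji hiN => h i hji (by omega), Nat.sub_add_comm hjN, pow_succ]
    ring

lemma triangularSum_eq_neg_one_pow (hτ : HasTableau τ b) {K L : ℕ → ℕ} {N : ℕ}
    (h : ∀ i < N, K i + L i = p - 1) : triangularSum τ K L N = (-1) ^ N := by
  rw [triangularSum_eq_neg_one_pow_mul hτ N.zero_le fun i _ => h i, triangularSum_zero]
  simp

lemma triangularSum_eq_zero (hτ : HasTableau τ b) {K L : ℕ → ℕ} {j N : ℕ} (hjN : j < N)
    (hj : K j + L j < p - 1) (h : ∀ i, j < i → i < N → K i + L i = p - 1) :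
    triangularSum τ K L N = 0 := by
  rw [triangularSum_eq_neg_one_pow_mul hτ hjN fun i hji => h i hji, triangularSum_succ hτ]
  simp [sum_add_pow_mul_pow_eq_zero hj]

lemma triangularSum_eq_of_trivial_below (hτ : HasTableau τ b) {K L : ℕ → ℕ} {j N : ℕ}
    (hjN : j < N) (hbelow : ∀ i < j, K i = 0 ∧ L i = 0)
    (habove : ∀ i, j < i → i < N → K i + L i = p - 1) :
    triangularSum τ K L N =
      (-1) ^ (N - 1 - j) * ∑ u : Fin j → ZMod p, ∑ t : ZMod p, (t + b j u) ^ K j * t ^ L j := by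
  rw [triangularSum_eq_neg_one_pow_mul hτ hjN fun i hji => habove i hji, triangularSum_succ hτ,
    show N - (j + 1) = N - 1 - j by omega]
  congr 1
  refine sum_congr rfl fun u _ => ?_
  rw [prod_eq_one fun i hi => by simp [hbelow i (mem_range.1 hi)], one_mul]

end TriangularSums

lemma linearIndependent_of_triangular_duals {K M ι : Type*} [Field K] [AddCommGroup M]
    [Module K M] [LinearOrder ι] [Fintype ι] {v : ι → M} (φ : ι → M →ₗ[K] K)
    (hlt : ∀ i j, j < i → φ i (v j) = 0) (hdiag : ∀ i, φ i (v i) ≠ 0) :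
    LinearIndependent K v := by
  classical
  rw [Fintype.linearIndependent_iff]
  by_contra! h
  obtain ⟨c, hc, hne⟩ := h
  obtain ⟨i, hi, himax⟩ := (univ.filter (c · ≠ 0)).exists_max_image id
    (by simpa [Finset.filter_nonempty_iff] using hne)
  have hi : c i ≠ 0 := (mem_filter.1 hi).2
  have hφ : φ i (∑ j, c j • v j) = c i * φ i (v i) := by
    rw [map_sum, sum_eq_single i]
    · simp
    · intro j _ hji
      rcases lt_or_gt_of_ne hji with hji | hij
      · simp [hlt i j hji]
      · have : c j = 0 := by_contra fun hj => (himax j (mem_filter.2 ⟨mem_univ _, hj⟩)).not_gt hij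
        simp [this]
    · simp
  rw [hc, map_zero] at hφ
  exact mul_ne_zero hi (hdiag i) hφ.symm

section Coefficients

variable {p : ℕ}

def restrictWord (p N : ℕ) : ((ℕ → ZMod p) → ZMod p) →ₗ[ZMod p] (Fin N → ZMod p) → ZMod p :=
  LinearMap.funLeft (ZMod p) (ZMod p) (extendWord N)

def compSub (τ : (ℕ → ZMod p) → ℕ → ZMod p) :
    ((ℕ → ZMod p) → ZMod p) →ₗ[ZMod p] (ℕ → ZMod p) → ZMod p :=
  LinearMap.funLeft (ZMod p) (ZMod p) τ - LinearMap.id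

lemma DependsOn.restrictWord_apply {N : ℕ} {f : (ℕ → ZMod p) → ZMod p}
    (hf : DependsOn f (Set.Iio N)) (x : ℕ → ZMod p) :
    restrictWord p N f (fun i : Fin N => x i) = f x :=
  hf fun _ hi => dif_pos hi

lemma compSub_apply (τ : (ℕ → ZMod p) → ℕ → ZMod p) (f : (ℕ → ZMod p) → ZMod p) :
    compSub τ f = f ∘ τ - f :=
  rfl

section

variable [NeZero p]

/-- The weight `∏ v_i ^ (p - 1 - digit p m i)` completes `e_m` to `∏ v_i ^ (p - 1)`, whose sum
over `(ZMod p)^N` is `(-1)^N`; this makes `kalDual p N m` dual to `e_m` up to lower terms. -/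
def kalDual (p N m : ℕ) [NeZero p] : ((Fin N → ZMod p) → ZMod p) →ₗ[ZMod p] ZMod p where
  toFun h := ∑ v, h v * ∏ i ∈ range N, extendWord N v i ^ (p - 1 - digit p m i)
  map_add' _ _ := by simp only [Pi.add_apply, add_mul, sum_add_distrib]
  map_smul' _ _ := by simp only [Pi.smul_apply, smul_eq_mul, mul_assoc, mul_sum, RingHom.id_apply]

lemma kalDual_restrictWord_comp (hp : 1 < p) (τ : (ℕ → ZMod p) → ℕ → ZMod p) {B N : ℕ}
    (hB : B < p ^ N) (m : ℕ) :
    kalDual p N m (restrictWord p N (kalMonomial p B ∘ τ)) =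
      triangularSum τ (digit p B) (fun i => p - 1 - digit p m i) N := by
  refine sum_congr rfl fun v _ => ?_
  simp only [restrictWord, LinearMap.funLeft_apply, Function.comp_apply,
    kalMonomial_eq_prod hp hB, ← prod_mul_distrib]

end

variable [Fact p.Prime] {τ : (ℕ → ZMod p) → ℕ → ZMod p}
  {b : (n : ℕ) → (Fin n → ZMod p) → ZMod p}

lemma kalDual_kalMonomial_comp (hτ : HasTableau τ b) {B m N : ℕ} (hBm : B ≤ m)
    (hm : m < p ^ N) :
    kalDual p N m (restrictWord p N (kalMonomial p B ∘ τ)) = if B = m then (-1) ^ N else 0 := by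
  have hp := (Fact.out : p.Prime).one_lt
  have hdigit := digit_lt (p := p) (by omega)
  rw [kalDual_restrictWord_comp hp τ (hBm.trans_lt hm)]
  split_ifs with hB
  · subst hB
    exact triangularSum_eq_neg_one_pow hτ fun i _ => by have := hdigit B i; omega
  · obtain ⟨i, hi, habove⟩ := exists_digit_lt_of_lt hp (lt_of_le_of_ne hBm hB)
    have hiN : i < N := by
      by_contra hNi
      have := digit_eq_zero_of_lt_pow
        (hm.trans_le (Nat.pow_le_pow_right (by omega) (not_lt.1 hNi)))
      omega
    refine triangularSum_eq_zero hτ hiN (by have := hdigit m i; omega) fun k hik _ => ?_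
    have := hdigit m k
    have := habove k hik
    omega

lemma kalDual_kalMonomial {B m N : ℕ} (hBm : B ≤ m) (hm : m < p ^ N) :
    kalDual p N m (restrictWord p N (kalMonomial p B)) = if B = m then (-1) ^ N else 0 :=
  kalDual_kalMonomial_comp hasTableau_id hBm hm

lemma kalDual_compSub_kalMonomial_eq_zero (hτ : HasTableau τ b) {B m N : ℕ} (hBm : B ≤ m)
    (hm : m < p ^ N) :
    kalDual p N m (restrictWord p N (compSub τ (kalMonomial p B))) = 0 := by
  rw [compSub_apply, map_sub, map_sub, kalDual_kalMonomial_comp hτ hBm hm,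
    kalDual_kalMonomial hBm hm, sub_self]

lemma kalDual_compSub_kalMonomial_succ (hτ : HasTableau τ b) (n : ℕ) :
    kalDual p (n + 1) n (restrictWord p (n + 1) (compSub τ (kalMonomial p (n + 1)))) =
      (-1) ^ (n - (n + 1).factorization p) *
        -(digit p (n + 1) ((n + 1).factorization p) * ∑ u, b ((n + 1).factorization p) u) := by
  have hp := (Fact.out : p.Prime)
  obtain ⟨hj0, hjsucc⟩ := digit_factorization hp n
  set j := (n + 1).factorization p
  have hdigit := digit_lt (p := p) hp.pos
  have hjn : j < n + 1 := Nat.factorization_lt p n.add_one_ne_zero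
  have hbelow (i : ℕ) (hi : i < j) : digit p (n + 1) i = 0 ∧ p - 1 - digit p n i = 0 := by
    have := digit_eq_of_lt_factorization hp hi
    omega
  have habove (i : ℕ) (hi : j < i) (_ : i < n + 1) :
      digit p (n + 1) i + (p - 1 - digit p n i) = p - 1 := by
    have := digit_eq_of_factorization_lt hp hi
    have := hdigit (n + 1) i
    omega
  have hB : n + 1 < p ^ (n + 1) := Nat.lt_pow_self hp.one_lt
  rw [compSub_apply, map_sub, map_sub, ← Function.comp_id (kalMonomial p (n + 1)),
    Function.comp_assoc, Function.id_comp, kalDual_restrictWord_comp hp.one_lt τ hB,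
    kalDual_restrictWord_comp hp.one_lt id hB,
    triangularSum_eq_of_trivial_below hτ hjn hbelow habove,
    triangularSum_eq_of_trivial_below hasTableau_id hjn hbelow habove, ← mul_sub,
    ← sum_sub_distrib, Nat.add_sub_cancel]
  have hKL : digit p (n + 1) j + (p - 1 - digit p n j) = p := by
    have := hdigit (n + 1) j
    omega
  simp_rw [add_zero, ← pow_add, sum_add_pow_mul_pow_sub_sum_pow (Nat.pos_of_ne_zero hj0) hKL,
    sum_neg_distrib, mul_sum]

lemma alphaKal_eq_sum_tableau {g : Equiv.Perm (ℕ → ZMod p)} (hg : HasTableau g b) (j : ℕ) :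
    alphaKal p g j = ∑ u, b j u := by
  refine sum_congr rfl fun u _ => ?_
  rw [hg, extendWord_apply_fin, add_sub_cancel_left]

lemma kalDual_compSub_kalMonomial_succ_eq_zero_iff {g : Equiv.Perm (ℕ → ZMod p)}
    (hg : HasTableau g b) (n : ℕ) :
    kalDual p (n + 1) n (restrictWord p (n + 1) (compSub g (kalMonomial p (n + 1)))) = 0 ↔
      alphaKal p g ((n + 1).factorization p) = 0 := by
  have hp := (Fact.out : p.Prime)
  have hdigit : (digit p (n + 1) ((n + 1).factorization p) : ZMod p) ≠ 0 := by
    rw [Ne, ZMod.natCast_eq_zero_iff]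
    exact fun h => (digit_factorization hp n).1 (Nat.eq_zero_of_dvd_of_lt h (digit_lt hp.pos _ _))
  rw [kalDual_compSub_kalMonomial_succ hg, alphaKal_eq_sum_tableau hg]
  simp [hdigit]

end Coefficients

section Membership

variable {p : ℕ} [Fact p.Prime]

lemma linearIndependent_restrictWord_kalMonomial (N : ℕ) :
    LinearIndependent (ZMod p) fun m : Fin (p ^ N) => restrictWord p N (kalMonomial p m) :=
  linearIndependent_of_triangular_duals (fun m => kalDual p N m)
    (fun i _ hji => by rw [kalDual_kalMonomial hji.le i.isLt, if_neg (Fin.val_ne_of_ne hji.ne)])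
    (fun i => by simp [kalDual_kalMonomial le_rfl i.isLt])

lemma span_restrictWord_kalMonomial (N : ℕ) :
    Submodule.span (ZMod p) (Set.range fun m : Fin (p ^ N) => restrictWord p N (kalMonomial p m)) =
      ⊤ :=
  (linearIndependent_restrictWord_kalMonomial N).span_eq_top_of_card_eq_finrank' <| by
    simp [Module.finrank_fintype_fun_eq_card]

lemma kalMonomial_dependsOn {m N : ℕ} (hm : m < p ^ N) :
    DependsOn (kalMonomial p m) (Set.Iio N) := fun x y h => by
  simp only [kalMonomial_eq_prod (Fact.out : p.Prime).one_lt hm]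
  exact prod_congr rfl fun i hi => by rw [h i (mem_range.1 hi)]

lemma mem_Uspan_of_dependsOn {N : ℕ} {f : (ℕ → ZMod p) → ZMod p}
    (hf : DependsOn f (Set.Iio N)) : f ∈ Uspan p (p ^ N - 1) := by
  have hR : restrictWord p N f ∈ Submodule.span (ZMod p)
      (Set.range fun m : Fin (p ^ N) => restrictWord p N (kalMonomial p m)) := by
    rw [span_restrictWord_kalMonomial]
    trivial
  rw [Set.range_comp' (restrictWord p N), Submodule.span_image] at hR
  obtain ⟨u, hu, hRu⟩ := hR
  let T := LinearMap.funLeft (ZMod p) (ZMod p) (fun (x : ℕ → ZMod p) (i : Fin N) => x i) ∘ₗ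
    restrictWord p N
  have hTu : T u = u := LinearMap.eqOn_span' (g := LinearMap.id)
    (by rintro _ ⟨m, rfl⟩; exact funext (kalMonomial_dependsOn m.isLt).restrictWord_apply) hu
  have hfu : f = u := by
    rw [← hTu]
    exact funext fun x => (hf.restrictWord_apply x).symm.trans (congrFun hRu.symm _)
  rw [hfu]
  refine Submodule.span_mono ?_ hu
  rintro _ ⟨m, rfl⟩
  exact ⟨m, Nat.le_sub_one_of_lt m.isLt, rfl⟩

lemma exists_eq_smul_add_of_mem_Uspan {n : ℕ} {f : (ℕ → ZMod p) → ZMod p}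
    (hf : f ∈ Uspan p n) :
    ∃ c : ZMod p, ∃ z ∈ Submodule.span (ZMod p) (kalMonomial p '' {m | m < n}),
      f = c • kalMonomial p n + z := by
  rwa [Uspan, show {m | m ≤ n} = insert n {m | m < n} by ext; simp [le_iff_lt_or_eq, or_comm],
    Set.image_insert_eq, Submodule.mem_span_insert] at hf

lemma kalDual_eq_zero_of_mem_span {n N : ℕ} (hn : n < p ^ N) {z : (ℕ → ZMod p) → ZMod p}
    (hz : z ∈ Submodule.span (ZMod p) (kalMonomial p '' {m | m < n})) :
    kalDual p N n (restrictWord p N z) = 0 := by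
  suffices Submodule.span (ZMod p) (kalMonomial p '' {m | m < n}) ≤
      LinearMap.ker (kalDual p N n ∘ₗ restrictWord p N) from this hz
  rw [Submodule.span_le]
  rintro _ ⟨m, hm, rfl⟩
  exact (kalDual_kalMonomial (le_of_lt hm) hn).trans (if_neg (ne_of_lt hm))

lemma exists_eq_kalDual_smul_add {n N : ℕ} (hn : n < p ^ N) {f : (ℕ → ZMod p) → ZMod p}
    (hf : f ∈ Uspan p n) :
    ∃ z ∈ Submodule.span (ZMod p) (kalMonomial p '' {m | m < n}),
      f = ((-1) ^ N * kalDual p N n (restrictWord p N f)) • kalMonomial p n + z := by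
  obtain ⟨c, z, hz, rfl⟩ := exists_eq_smul_add_of_mem_Uspan hf
  refine ⟨z, hz, ?_⟩
  rw [map_add, map_add, map_smul, map_smul, kalDual_kalMonomial le_rfl hn, if_pos rfl,
    kalDual_eq_zero_of_mem_span hn hz, smul_eq_mul, add_zero, mul_left_comm, ← mul_pow]
  simp

lemma mem_Uspan_of_kalDual_eq_zero {n N : ℕ} (hn : n + 1 < p ^ N)
    {f : (ℕ → ZMod p) → ZMod p} (hf : f ∈ Uspan p (n + 1))
    (h0 : kalDual p N (n + 1) (restrictWord p N f) = 0) : f ∈ Uspan p n := by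
  obtain ⟨z, hz, hfz⟩ := exists_eq_kalDual_smul_add hn hf
  rw [hfz, h0, mul_zero, zero_smul, zero_add]
  exact Submodule.span_mono (Set.image_mono fun m => Nat.le_of_lt_succ) hz

lemma mem_Uspan_of_dependsOn_of_kalDual_eq_zero {t N : ℕ} (ht : t < p ^ N)
    {f : (ℕ → ZMod p) → ZMod p} (hf : DependsOn f (Set.Iio N))
    (h0 : ∀ m, t < m → m < p ^ N → kalDual p N m (restrictWord p N f) = 0) :
    f ∈ Uspan p t := by
  refine Nat.decreasingInduction (motive := fun m _ => t ≤ m → f ∈ Uspan p m)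
    (fun k hk ih htk => ?_) (fun _ => mem_Uspan_of_dependsOn hf) (Nat.le_sub_one_of_lt ht) le_rfl
  exact mem_Uspan_of_kalDual_eq_zero (by omega) (ih (by omega)) (h0 (k + 1) (by omega) (by omega))

variable {τ : (ℕ → ZMod p) → ℕ → ZMod p} {b : (n : ℕ) → (Fin n → ZMod p) → ZMod p}

lemma compSub_kalMonomial_dependsOn (hτ : HasTableau τ b) {m N : ℕ} (hm : m < p ^ N) :
    DependsOn (compSub τ (kalMonomial p m)) (Set.Iio N) := fun x y h => by
  have hτxy : ∀ i ∈ Set.Iio N, τ x i = τ y i := fun i hi =>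
    hτ.apply_eq_of_forall_le fun k hk => h k (lt_of_le_of_lt hk hi)
  simp only [compSub_apply, Pi.sub_apply, Function.comp_apply, kalMonomial_dependsOn hm h,
    kalMonomial_dependsOn hm hτxy]

lemma compSub_mem_Uspan (hτ : HasTableau τ b) {n : ℕ} {f : (ℕ → ZMod p) → ZMod p}
    (hf : f ∈ Uspan p (n + 1)) : compSub τ f ∈ Uspan p n := by
  suffices Uspan p (n + 1) ≤ (Uspan p n).comap (compSub τ) from this hf
  refine Submodule.span_le.2 ?_
  rintro _ ⟨m, hm, rfl⟩
  have hp := (Fact.out : p.Prime).one_lt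
  have hmN : m < p ^ (n + 1) := lt_of_le_of_lt hm (Nat.lt_pow_self hp)
  exact mem_Uspan_of_dependsOn_of_kalDual_eq_zero (lt_pow_add_one hp n)
    (compSub_kalMonomial_dependsOn hτ hmN)
    fun k hnk hk => kalDual_compSub_kalMonomial_eq_zero hτ ((show m ≤ n + 1 from hm).trans hnk) hk

lemma kalDual_compSub_eq_zero_of_alphaKal_eq_zero {g : Equiv.Perm (ℕ → ZMod p)}
    (hg : HasTableau g b) {n : ℕ} (hα : alphaKal p g ((n + 1).factorization p) = 0)
    {f : (ℕ → ZMod p) → ZMod p} (hf : f ∈ Uspan p (n + 1)) :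
    kalDual p (n + 1) n (restrictWord p (n + 1) (compSub g f)) = 0 := by
  suffices Uspan p (n + 1) ≤
      LinearMap.ker (kalDual p (n + 1) n ∘ₗ restrictWord p (n + 1) ∘ₗ compSub g) from this hf
  refine Submodule.span_le.2 ?_
  rintro _ ⟨m, hm, rfl⟩
  rcases (Nat.le_succ_iff.1 hm) with hmn | rfl
  · exact kalDual_compSub_kalMonomial_eq_zero hg hmn (lt_pow_add_one (Fact.out : p.Prime).one_lt n)
  · exact (kalDual_compSub_kalMonomial_succ_eq_zero_iff hg n).2 hα

end Membership

section Uniserial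

variable {p : ℕ}

def diffSpan (p : ℕ) (G : Subgroup (Equiv.Perm (ℕ → ZMod p))) (n : ℕ) :
    Submodule (ZMod p) ((ℕ → ZMod p) → ZMod p) :=
  Submodule.span (ZMod p)
    {h | ∃ g ∈ G, ∃ f ∈ Uspan p (n + 1), h = fun x => f (g.symm x) - f x}

variable {G : Subgroup (Equiv.Perm (ℕ → ZMod p))}

lemma diffSpan_mono {m n : ℕ} (hmn : m ≤ n) : diffSpan p G m ≤ diffSpan p G n := by
  refine Submodule.span_mono ?_
  rintro _ ⟨g, hg, f, hf, rfl⟩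
  exact ⟨g, hg, f, Uspan_mono (Nat.succ_le_succ hmn) hf, rfl⟩

variable [Fact p.Prime] (hG : ∀ g ∈ G, IsTriangular p g)
include hG

lemma diffSpan_le_Uspan (n : ℕ) : diffSpan p G n ≤ Uspan p n := by
  refine Submodule.span_le.2 ?_
  rintro _ ⟨g, hg, f, hf, rfl⟩
  obtain ⟨b, hb⟩ := hG _ (G.inv_mem hg)
  exact compSub_mem_Uspan hb hf

lemma diffSpan_le_ker {n : ℕ} (hα : ∀ g ∈ G, alphaKal p g ((n + 1).factorization p) = 0) :
    diffSpan p G n ≤ LinearMap.ker (kalDual p (n + 1) n ∘ₗ restrictWord p (n + 1)) := by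
  refine Submodule.span_le.2 ?_
  rintro _ ⟨g, hg, f, hf, rfl⟩
  obtain ⟨b, hb⟩ := hG _ (G.inv_mem hg)
  exact kalDual_compSub_eq_zero_of_alphaKal_eq_zero hb (hα _ (G.inv_mem hg)) hf

lemma kalMonomial_mem_diffSpan {n : ℕ}
    (hα : ∃ g ∈ G, alphaKal p g ((n + 1).factorization p) ≠ 0)
    (hlow : ∀ m < n, kalMonomial p m ∈ diffSpan p G n) : kalMonomial p n ∈ diffSpan p G n := by
  obtain ⟨g, hg, hαg⟩ := hα
  obtain ⟨b, hb⟩ := hG g hg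
  set f := compSub g (kalMonomial p (n + 1))
  have hfS : f ∈ diffSpan p G n := Submodule.subset_span
    ⟨g⁻¹, G.inv_mem hg, kalMonomial p (n + 1), kalMonomial_mem_Uspan le_rfl, rfl⟩
  have hn : n < p ^ (n + 1) := lt_pow_add_one (Fact.out : p.Prime).one_lt n
  obtain ⟨z, hz, hfz⟩ := exists_eq_kalDual_smul_add hn
    (compSub_mem_Uspan hb (kalMonomial_mem_Uspan le_rfl))
  have hzS : z ∈ diffSpan p G n := by
    refine Submodule.span_le.2 ?_ hz
    rintro _ ⟨m, hm, rfl⟩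
    exact hlow m hm
  have hc : (-1) ^ (n + 1) * kalDual p (n + 1) n (restrictWord p (n + 1) f) ≠ 0 :=
    mul_ne_zero (by simp) ((kalDual_compSub_kalMonomial_succ_eq_zero_iff hb n).not.2 hαg)
  rw [← inv_smul_smul₀ hc (kalMonomial p n), eq_sub_of_add_eq hfz.symm]
  exact Submodule.smul_mem _ _ (Submodule.sub_mem _ hfS hzS)

end Uniserial

/-- let `G` be a subgroup of `K_p`. The action of `G` is uniserial (for
every `n ≥ 0` the span of `⋃_{g ∈ G} {f ∘ g⁻¹ − f : f ∈ U_{n+1}}` equals `U_n`) if and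
only if for every `k ≥ 0` there exists `g ∈ G` with `α_k(g) ≠ 0`, i.e. every homomorphism
`α_k : G → ZMod p` is nonzero. -/
theorem uniseriality_criterion (p : ℕ) (hp : p.Prime) [NeZero p]
    (G : Subgroup (Equiv.Perm (ℕ → ZMod p)))
    (hG : ∀ g ∈ G, IsTriangular p g) :
    (∀ n : ℕ,
      Submodule.span (ZMod p)
        {h : (ℕ → ZMod p) → ZMod p |
          ∃ g ∈ G, ∃ f ∈ Uspan p (n + 1), h = fun x => f (g.symm x) - f x} =
        Uspan p n) ↔
    (∀ k : ℕ, ∃ g ∈ G, alphaKal p g k ≠ 0) := by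
  have := Fact.mk hp
  change (∀ n, diffSpan p G n = Uspan p n) ↔ _
  constructor
  · intro huni k
    by_contra! hα
    set n := p ^ k - 1
    have hn : n + 1 = p ^ k := Nat.sub_add_cancel (Nat.one_le_pow _ _ hp.pos)
    have hker := diffSpan_le_ker hG (n := n) (by rwa [hn, Nat.factorization_pow_self hp])
      (huni n ▸ kalMonomial_mem_Uspan le_rfl)
    simp [kalDual_kalMonomial le_rfl (lt_pow_add_one hp.one_lt n)] at hker
  · intro hα n
    induction n using Nat.strong_induction_on with
    | _ n ih =>
      refine le_antisymm (diffSpan_le_Uspan hG n) (Submodule.span_le.2 ?_)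
      have hlow (m : ℕ) (hm : m < n) : kalMonomial p m ∈ diffSpan p G n :=
        diffSpan_mono hm.le ((ih m hm).ge (kalMonomial_mem_Uspan le_rfl))
      rintro _ ⟨m, hm, rfl⟩
      rcases (show m ≤ n from hm).lt_or_eq with hm | rfl
      · exact hlow m hm
      · exact kalMonomial_mem_diffSpan hG (hα _) hlow
end

section
/- Let p be a prime, and let g be an automorphism of the rooted tree over the alphabet ZMod p, with ḡ the induced homeomorphism of (ZMod p)^ℕ. There is a unique column-finite matrix A_g : ℕ × ℕ → ZMod p such that e_n ∘ ḡ⁻¹ = Σ_m A_g(m, n) · e_m for every n (with only finitely many nonzero terms in each column). Then the matrix A_g is p-automatic if and only if g is finite-state. -/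
/-- A matrix `A : ℕ × ℕ → k` is column-finite if every column has finitely many
nonzero entries. -/
def ColumnFinite {k : Type*} [Zero k] (A : ℕ → ℕ → k) : Prop :=
  ∀ j : ℕ, {i : ℕ | A i j ≠ 0}.Finite

/-- The `(i,j)` `d`-decimation of a matrix: `Ξ_d(A)_{ij}(r,s) = A (i + d·r) (j + d·s)`. -/
def matDecimation {k : Type*} (d i j : ℕ) (A : ℕ → ℕ → k) : ℕ → ℕ → k :=
  fun r s => A (i + d * r) (j + d * s)

/-- A matrix is `d`-automatic if it belongs to a finite set of matrices closed under
taking all `d`-decimations. -/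
def MatIsAutomatic {k : Type*} (d : ℕ) (A : ℕ → ℕ → k) : Prop :=
  ∃ S : Set (ℕ → ℕ → k), S.Finite ∧ A ∈ S ∧
    ∀ B ∈ S, ∀ i < d, ∀ j < d, matDecimation d i j B ∈ S

/-- The section `g|_v` of a length- and prefix-preserving bijection `g` of the set of
finite words, at the finite word `v`: it satisfies `g (v ++ w) = g v ++ g|_v w`. -/
def treeSection {X : Type*} (g : List X → List X) (v : List X) :
    List X → List X :=
  fun w => (g (v ++ w)).drop v.length

/-- A tree automorphism is finite-state if its set of sections is finite. -/
def FiniteState {X : Type*} (g : List X → List X) : Prop :=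
  (Set.range (treeSection g)).Finite

/-!
Put `F = ḡ⁻¹`. It is causal (the first `n` letters of `F x` depend only on the first `n` letters
of `x`), and `F (b y) = φ(b) F|_b(y)` with `F|_b` its section at the letter `b`. Since
`e_{j + p s}(x) = x₀^j e_s(x₁ x₂ …)` for `j < p`, column `j + p s` of `A_F` is the coefficient
vector of `x ↦ φ(x₀)^j e_s(F|_{x₀}(x₁ x₂ …))`. Interpolating the dependence on `x₀ ∈ ZMod p` by a
polynomial of degree `< p` writes each decimation `Ξ_{ij}(A_F)` as a linear combination of the
matrices `A_{F|_b}`, and conversely gives `A_{F|_c} = Σ_i c^i Ξ_{i0}(A_F)`.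

The monomials form a basis (the `p^k` monomials `e_m`, `m < p^k`, span the `p^k`-dimensional space
of functions of the first `k` letters), and `e_{p^k}(x) = x_k`, so `A_F` determines `F`. Hence if
`A_F` is automatic, the finite span of a decimation-closed set containing it contains the
matrices of all sections of `F`, so there are finitely many; conversely, the span of the matrices
of finitely many sections is finite and closed under decimation. Finally `g` and `g⁻¹` have
equally many sections, as `g⁻¹|_{g v} = (g|_v)⁻¹`.
-/

section TreeAutomorphism

variable {X : Type*}

def IsTreeAutomorphism (g : Equiv.Perm (List X)) : Prop :=
  (∀ v, (g v).length = v.length) ∧ ∀ v w, v <+: w → g v <+: g w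

namespace IsTreeAutomorphism

variable {g : Equiv.Perm (List X)}

theorem symm (hg : IsTreeAutomorphism g) : IsTreeAutomorphism g.symm := by
  have hlen v : (g.symm v).length = v.length := by rw [← hg.1, Equiv.apply_symm_apply]
  refine ⟨hlen, fun v w hvw => ?_⟩
  set u := (g.symm w).take v.length
  have hgu : g u <+: w := by simpa using hg.2 _ _ (List.take_prefix v.length (g.symm w))
  have hlen_u : (g u).length = v.length := by simp [u, hg.1, hlen, hvw.length_le]
  have hu : g u = v := (List.prefix_of_prefix_length_le hgu hvw hlen_u.le).eq_of_length hlen_u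
  rw [← hu, Equiv.symm_apply_apply]
  exact List.take_prefix _ _

theorem treeSection_symm_apply_treeSection (hg : IsTreeAutomorphism g) (v w : List X) :
    treeSection g.symm (g v) (treeSection g v w) = w := by
  have h := List.prefix_iff_eq_append.1 (hg.2 v (v ++ w) (List.prefix_append v w))
  simp only [treeSection, hg.1] at h ⊢
  rw [h, Equiv.symm_apply_apply, List.drop_left]

theorem invFun_treeSection (hg : IsTreeAutomorphism g) (u : List X) :
    Function.invFun (treeSection g (g.symm u)) = treeSection g.symm u := by
  refine Function.invFun_eq_of_injective_of_rightInverse ?_ fun w => ?_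
  · refine Function.LeftInverse.injective (g := treeSection g.symm u) fun w => ?_
    simpa using hg.treeSection_symm_apply_treeSection (g.symm u) w
  · simpa using hg.symm.treeSection_symm_apply_treeSection u w

theorem finiteState_symm (hg : IsTreeAutomorphism g) (hfin : FiniteState g) :
    FiniteState g.symm := by
  refine (hfin.image Function.invFun).subset ?_
  rintro _ ⟨u, rfl⟩
  exact ⟨_, ⟨g.symm u, rfl⟩, hg.invFun_treeSection u⟩

theorem finiteState_symm_iff (hg : IsTreeAutomorphism g) : FiniteState g.symm ↔ FiniteState g :=
  ⟨hg.symm.finiteState_symm, hg.finiteState_symm⟩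

end IsTreeAutomorphism

end TreeAutomorphism

section Sequences

variable {X : Type*}

def appendSeq (v : List X) (y : ℕ → X) : ℕ → X :=
  fun i => if h : i < v.length then v[i] else y (i - v.length)

@[simp]
theorem appendSeq_nil (y : ℕ → X) : appendSeq [] y = y := by
  funext i
  simp [appendSeq]

theorem appendSeq_of_lt {v : List X} {i : ℕ} (y : ℕ → X) (h : i < v.length) :
    appendSeq v y i = v[i] := dif_pos h

@[simp]
theorem appendSeq_length_add (v : List X) (y : ℕ → X) (n : ℕ) :
    appendSeq v y (v.length + n) = y n := by
  simp [appendSeq]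

theorem appendSeq_append (v w : List X) (y : ℕ → X) :
    appendSeq (v ++ w) y = appendSeq v (appendSeq w y) := by
  funext i
  rcases lt_or_ge i v.length with h | h
  · rw [appendSeq_of_lt _ h, appendSeq_of_lt _ (by simp; omega), List.getElem_append_left h]
  · obtain ⟨n, rfl⟩ := Nat.exists_eq_add_of_le h
    rw [appendSeq_length_add]
    rcases lt_or_ge n w.length with hn | hn
    · rw [appendSeq_of_lt _ (by simp; omega), appendSeq_of_lt _ hn,
        List.getElem_append_right (by omega)]
      simp
    · simp [appendSeq, Nat.sub_add_eq, hn.not_gt]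

theorem appendSeq_singleton_tail (x : ℕ → X) : appendSeq [x 0] (fun i => x (i + 1)) = x := by
  funext i
  cases i <;> simp [appendSeq]

theorem appendSeq_eq_of_forall_lt (v : List X) {x y : ℕ → X} {n : ℕ}
    (h : ∀ i < n, x i = y i) : ∀ i < v.length + n, appendSeq v x i = appendSeq v y i := by
  intro i hi
  unfold appendSeq
  split_ifs
  · rfl
  · exact h _ (by omega)

theorem ofFn_appendSeq_length (w : List X) (y : ℕ → X) :
    (List.ofFn fun i : Fin w.length => appendSeq w y i) = w :=
  List.ext_getElem (by simp) fun i h _ => by simp [appendSeq_of_lt y (by simpa using h)]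

theorem ofFn_appendSeq (v : List X) (y : ℕ → X) (n : ℕ) :
    (List.ofFn fun i : Fin (v.length + n) => appendSeq v y i) =
      v ++ List.ofFn fun i : Fin n => y i := by
  rw [List.ofFn_add]
  congr 1
  · exact ofFn_appendSeq_length v y
  · simp

def IsBoundaryMap (f : List X → List X) (F : (ℕ → X) → ℕ → X) : Prop :=
  ∀ (x : ℕ → X) (n : ℕ), f (List.ofFn fun i : Fin n => x i) = List.ofFn fun i : Fin n => F x i

def IsCausal (F : (ℕ → X) → ℕ → X) : Prop :=
  ∀ (n : ℕ) (x y : ℕ → X), (∀ i < n, x i = y i) → ∀ i < n, F x i = F y i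

def seqSection (F : (ℕ → X) → ℕ → X) (v : List X) : (ℕ → X) → ℕ → X :=
  fun y n => F (appendSeq v y) (v.length + n)

theorem seqSection_append (F : (ℕ → X) → ℕ → X) (v w : List X) :
    seqSection (seqSection F v) w = seqSection F (v ++ w) := by
  funext y n
  simp only [seqSection, appendSeq_append, List.length_append, add_assoc]

theorem seqSection_nil (F : (ℕ → X) → ℕ → X) : seqSection F [] = F := by
  funext y n
  simp [seqSection]

theorem IsBoundaryMap.isCausal {f : List X → List X} {F : (ℕ → X) → ℕ → X}
    (hf : IsBoundaryMap f F) : IsCausal F := by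
  intro n x y hxy i hi
  have h := congrArg f (List.ofFn_inj.2 (funext fun i : Fin n => hxy i i.2))
  rw [hf, hf] at h
  exact congrFun (List.ofFn_inj.1 h) ⟨i, hi⟩

theorem IsBoundaryMap.symm {g : Equiv.Perm (List X)} {G : Equiv.Perm (ℕ → X)}
    (hg : IsBoundaryMap g G) : IsBoundaryMap g.symm G.symm := by
  intro x n
  rw [Equiv.symm_apply_eq, hg, Equiv.apply_symm_apply]

theorem IsBoundaryMap.treeSection_seqSection {f : List X → List X} {F : (ℕ → X) → ℕ → X}
    (hf : IsBoundaryMap f F) (v : List X) : IsBoundaryMap (treeSection f v) (seqSection F v) := by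
  intro y n
  rw [treeSection, ← ofFn_appendSeq, hf, List.ofFn_add, List.drop_left' (by simp)]
  rfl

namespace IsBoundaryMap

variable [Inhabited X] {f : List X → List X} {F : (ℕ → X) → ℕ → X}

theorem eq_getD (hf : IsBoundaryMap f F) :
    F = fun x n => (f (List.ofFn fun i : Fin (n + 1) => x i)).getD n default := by
  funext x n
  rw [hf, List.getD_eq_getElem _ _ (by simp), List.getElem_ofFn]

theorem eq_ofFn (hf : IsBoundaryMap f F) :
    f = fun w => List.ofFn fun i : Fin w.length => F (appendSeq w fun _ => default) i := by
  funext w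
  conv_lhs => rw [← ofFn_appendSeq_length w fun _ => default]
  exact hf _ _

theorem finite_range_treeSection_iff (hf : IsBoundaryMap f F) :
    (Set.range (treeSection f)).Finite ↔ (Set.range (seqSection F)).Finite := by
  constructor
  · refine fun h => (h.image fun t x n =>
      (t (List.ofFn fun i : Fin (n + 1) => x i)).getD n default).subset ?_
    rintro _ ⟨v, rfl⟩
    exact ⟨_, ⟨v, rfl⟩, (hf.treeSection_seqSection v).eq_getD.symm⟩
  · refine fun h => (h.image fun T w =>
      List.ofFn fun i : Fin w.length => T (appendSeq w fun _ => default) i).subset ?_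
    rintro _ ⟨v, rfl⟩
    exact ⟨_, ⟨v, rfl⟩, (hf.treeSection_seqSection v).eq_ofFn.symm⟩

end IsBoundaryMap

variable {F : (ℕ → X) → ℕ → X}

theorem IsCausal.isCausal_seqSection (hF : IsCausal F) (v : List X) : IsCausal (seqSection F v) :=
  fun n _ _ hxy i hi => hF (v.length + n) _ _ (appendSeq_eq_of_forall_lt v hxy) _ (by omega)

theorem IsCausal.apply_appendSeq_singleton_zero (hF : IsCausal F) (b : X) (y : ℕ → X) :
    F (appendSeq [b] y) 0 = F (fun _ => b) 0 :=
  hF 1 _ _ (fun i hi => by obtain rfl : i = 0 := (by omega); simp [appendSeq]) 0 one_pos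

end Sequences

section Kaloujnine

open Finset

variable {p : ℕ}

@[simp]
theorem kalMonomial_zero (x : ℕ → ZMod p) : kalMonomial p 0 x = 1 := by
  simp [kalMonomial]

theorem kalMonomial_congr {n : ℕ} {x y : ℕ → ZMod p} (h : ∀ i ≤ n, x i = y i) :
    kalMonomial p n x = kalMonomial p n y :=
  prod_congr rfl fun i hi => by rw [h i (Nat.lt_succ_iff.1 (mem_range.1 hi))]

variable [hp : Fact p.Prime]

theorem kalMonomial_eq_prod_range {n N : ℕ} (hN : n < N) (x : ℕ → ZMod p) :
    kalMonomial p n x = ∏ i ∈ range N, x i ^ (n / p ^ i % p) := by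
  refine prod_subset (range_subset_range.2 hN) fun i hi hni => ?_
  have hin : n < p ^ i :=
    (Nat.lt_pow_self hp.out.one_lt).trans_le (Nat.pow_le_pow_right hp.out.pos (by simp_all; omega))
  simp [Nat.div_eq_of_lt hin]

theorem kalMonomial_add_mul {j : ℕ} (hj : j < p) (s : ℕ) (x : ℕ → ZMod p) :
    kalMonomial p (j + p * s) x = x 0 ^ j * kalMonomial p s fun i => x (i + 1) := by
  have hs : s ≤ p * s := Nat.le_mul_of_pos_left s hp.out.pos
  rw [kalMonomial_eq_prod_range (N := j + p * s + 2) (by omega), prod_range_succ',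
    kalMonomial_eq_prod_range (N := j + p * s + 1) (by omega), mul_comm]
  congr 1
  · simp [Nat.mod_eq_of_lt hj]
  · refine prod_congr rfl fun i _ => ?_
    rw [pow_succ', ← Nat.div_div_eq_div_mul, Nat.add_mul_div_left _ _ hp.out.pos,
      Nat.div_eq_of_lt hj, zero_add]

theorem kalMonomial_pow (k : ℕ) (x : ℕ → ZMod p) : kalMonomial p (p ^ k) x = x k := by
  induction k generalizing x with
  | zero => simpa using kalMonomial_add_mul hp.out.one_lt 0 x
  | succ k ih => simpa [pow_succ', ih] using kalMonomial_add_mul hp.out.pos (p ^ k) x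

end Kaloujnine

section Interpolation

open Finset Polynomial

def shiftMul {R : Type*} [CommRing R] (j : ℕ) : ((ℕ → R) → R) →ₗ[R] (ℕ → R) → R :=
  LinearMap.mulLeft R (fun x => x 0 ^ j) ∘ₗ LinearMap.funLeft R R fun x i => x (i + 1)

theorem shiftMul_apply {R : Type*} [CommRing R] (j : ℕ) (g : (ℕ → R) → R) (x : ℕ → R) :
    shiftMul j g x = x 0 ^ j * g (fun i => x (i + 1)) := rfl

variable {p : ℕ} [hp : Fact p.Prime]

theorem shiftMul_kalMonomial {j : ℕ} (hj : j < p) (s : ℕ) :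
    shiftMul j (kalMonomial p s) = kalMonomial p (j + p * s) :=
  funext fun x => (kalMonomial_add_mul hj s x).symm

noncomputable def deltaPoly (b : ZMod p) : (ZMod p)[X] := 1 - (X - C b) ^ (p - 1)

theorem sum_coeff_deltaPoly_mul_pow (a b : ZMod p) :
    ∑ j ∈ range p, (deltaPoly b).coeff j * a ^ j = if a = b then 1 else 0 := by
  have hdeg : (deltaPoly b).natDegree < p := by
    refine (natDegree_sub_le _ _).trans_lt ?_
    simpa using hp.out.pos
  rw [← eval_eq_sum_range' hdeg]
  simp only [deltaPoly, eval_sub, eval_one, eval_pow, eval_X, eval_C]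
  split_ifs with hab
  · simp [hab, Nat.sub_eq_zero_iff_le, hp.out.one_lt]
  · rw [ZMod.pow_card_sub_one_eq_one (sub_ne_zero.2 hab), sub_self]

theorem eq_sum_shiftMul (f : (ℕ → ZMod p) → ZMod p) :
    f = ∑ j ∈ range p, ∑ b : ZMod p,
      (deltaPoly b).coeff j • shiftMul j fun y => f (appendSeq [b] y) := by
  funext x
  simp only [Finset.sum_apply, Pi.smul_apply, shiftMul_apply, smul_eq_mul]
  rw [sum_comm]
  simp_rw [← mul_assoc, ← Finset.sum_mul, sum_coeff_deltaPoly_mul_pow]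
  simp [appendSeq_singleton_tail]

end Interpolation

section KaloujnineBasis

open Finset

variable {p : ℕ} [hp : Fact p.Prime]

theorem mem_span_kalMonomial_of_forall_eq {k : ℕ} {f : (ℕ → ZMod p) → ZMod p}
    (hf : ∀ x y, (∀ i < k, x i = y i) → f x = f y) :
    f ∈ Submodule.span (ZMod p) (kalMonomial p '' Set.Iio (p ^ k)) := by
  induction k generalizing f with
  | zero =>
    have hconst : f = f 0 • kalMonomial p 0 := funext fun x => by simpa using hf x 0 (by simp)
    rw [hconst]
    exact Submodule.smul_mem _ _ (Submodule.subset_span ⟨0, by simp, rfl⟩)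
  | succ k ih =>
    rw [eq_sum_shiftMul f]
    refine Submodule.sum_mem _ fun j hj => Submodule.sum_mem _ fun b _ =>
      Submodule.smul_mem _ _ ?_
    have hmap : (Submodule.span (ZMod p) (kalMonomial p '' Set.Iio (p ^ k))).map (shiftMul j) ≤
        Submodule.span (ZMod p) (kalMonomial p '' Set.Iio (p ^ (k + 1))) := by
      rw [Submodule.map_span_le]
      rintro _ ⟨m, hm, rfl⟩
      rw [shiftMul_kalMonomial (mem_range.1 hj)]
      refine Submodule.subset_span ⟨_, ?_, rfl⟩
      have hj : j < p := mem_range.1 hj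
      have hm : m + 1 ≤ p ^ k := hm
      rw [Set.mem_Iio, pow_succ']
      nlinarith
    exact hmap ⟨_, ih fun x y hxy => hf _ _ fun i hi =>
      appendSeq_eq_of_forall_lt [b] hxy i (by simpa [add_comm] using hi), rfl⟩

theorem linearIndependent_kalMonomial : LinearIndependent (ZMod p) (kalMonomial p) := by
  have hfin (k : ℕ) : LinearIndependent (ZMod p) fun m : Fin (p ^ k) => kalMonomial p m := by
    let E := LinearMap.funLeft (ZMod p) (ZMod p)
      fun (y : Fin k → ZMod p) i => if h : i < k then y ⟨i, h⟩ else 0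
    refine .of_comp E (linearIndependent_of_top_le_span_of_card_eq_finrank ?_ ?_)
    · rintro φ -
      have hφ : φ = E fun x => φ fun i => x i :=
        funext fun y => congrArg φ (funext fun i => by simp)
      rw [hφ, Set.range_comp, ← Submodule.map_span]
      refine Submodule.mem_map_of_mem (Submodule.span_mono ?_
        (mem_span_kalMonomial_of_forall_eq fun x y hxy => congrArg φ (funext fun i => hxy i i.2)))
      rintro _ ⟨m, hm, rfl⟩
      exact ⟨⟨m, hm⟩, rfl⟩
    · simp [Module.finrank_fintype_fun_eq_card]
  rw [linearIndependent_iff_finset_linearIndependent]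
  intro s
  obtain ⟨N, hN⟩ := s.exists_nat_subset_range
  let f (m : s) : Fin (p ^ N) := ⟨m, (mem_range.1 (hN m.2)).trans (Nat.lt_pow_self hp.out.one_lt)⟩
  exact (hfin N).comp f fun m m' h => Subtype.ext (congrArg Fin.val h)

end KaloujnineBasis

section KaloujnineMatrix

open Finset

variable {p : ℕ} [hp : Fact p.Prime]

def IsKalMatrix (F : (ℕ → ZMod p) → ℕ → ZMod p) (A : ℕ → ℕ → ZMod p) : Prop :=
  ColumnFinite A ∧
    ∀ (n : ℕ) (x : ℕ → ZMod p), kalMonomial p n (F x) = ∑ᶠ m : ℕ, A m n * kalMonomial p m x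

-- `0` in columns `n` where `e_n ∘ F` is not a finite combination of monomials; for causal `F`
-- there are none (`IsCausal.kalMatrix_apply`).
open Classical in
noncomputable def kalMatrix (F : (ℕ → ZMod p) → ℕ → ZMod p) (m n : ℕ) : ZMod p :=
  if h : (fun x => kalMonomial p n (F x)) ∈ Submodule.span (ZMod p) (Set.range (kalMonomial p))
  then linearIndependent_kalMonomial.repr ⟨_, h⟩ m else 0

theorem linearCombination_kalMonomial_apply (l : ℕ →₀ ZMod p) (x : ℕ → ZMod p) :
    Finsupp.linearCombination (ZMod p) (kalMonomial p) l x = ∑ᶠ m, l m * kalMonomial p m x := by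
  rw [Finsupp.linearCombination_apply, Finsupp.sum, Finset.sum_apply]
  exact (finsum_eq_sum_of_support_subset (fun m => l m * kalMonomial p m x) fun m hm =>
    Finsupp.mem_support_iff.2 (left_ne_zero_of_mul (Function.mem_support.1 hm))).symm

theorem repr_kalMonomial_eq_iff (w : Submodule.span (ZMod p) (Set.range (kalMonomial p)))
    (c : ℕ → ZMod p) :
    ⇑(linearIndependent_kalMonomial.repr w) = c ↔
      {m | c m ≠ 0}.Finite ∧
        ∀ x, (w : (ℕ → ZMod p) → ZMod p) x = ∑ᶠ m, c m * kalMonomial p m x := by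
  constructor
  · rintro rfl
    refine ⟨Finsupp.hasFiniteSupport _, fun x => ?_⟩
    rw [← linearCombination_kalMonomial_apply, LinearIndependent.linearCombination_repr]
  · rintro ⟨hc, hw⟩
    rw [linearIndependent_kalMonomial.repr_eq (l := Finsupp.ofSupportFinite c hc)
      (funext fun x => by rw [linearCombination_kalMonomial_apply, hw]; rfl)]
    rfl

theorem IsCausal.kalMonomial_comp_mem_span {F : (ℕ → ZMod p) → ℕ → ZMod p} (hF : IsCausal F)
    (n : ℕ) :
    (fun x => kalMonomial p n (F x)) ∈ Submodule.span (ZMod p) (Set.range (kalMonomial p)) :=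
  Submodule.span_mono (Set.image_subset_range _ _) <| mem_span_kalMonomial_of_forall_eq
    fun x y hxy => kalMonomial_congr fun i hi => hF (n + 1) x y hxy i (by omega)

theorem IsCausal.kalMatrix_apply {F : (ℕ → ZMod p) → ℕ → ZMod p} (hF : IsCausal F) (m n : ℕ) :
    kalMatrix F m n = linearIndependent_kalMonomial.repr ⟨_, hF.kalMonomial_comp_mem_span n⟩ m := by
  rw [kalMatrix, dif_pos]

theorem IsCausal.isKalMatrix_iff {F : (ℕ → ZMod p) → ℕ → ZMod p} (hF : IsCausal F)
    {A : ℕ → ℕ → ZMod p} : IsKalMatrix F A ↔ A = kalMatrix F := by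
  have hcol (n : ℕ) := repr_kalMonomial_eq_iff ⟨_, hF.kalMonomial_comp_mem_span n⟩ fun m => A m n
  simp only [IsKalMatrix, ColumnFinite, ← forall_and, ← hcol, funext_iff,
    hF.kalMatrix_apply]
  exact ⟨fun h m n => (h n m).symm, fun h n m => (h m n).symm⟩

theorem IsKalMatrix.eq_of_isKalMatrix {F G : (ℕ → ZMod p) → ℕ → ZMod p} {A : ℕ → ℕ → ZMod p}
    (hF : IsKalMatrix F A) (hG : IsKalMatrix G A) : F = G :=
  funext fun x => funext fun k => by rw [← kalMonomial_pow k (F x), hF.2, ← hG.2, kalMonomial_pow]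

end KaloujnineMatrix

theorem Finsupp.mapDomain_add_mul_apply {M : Type*} [AddCommMonoid M] {d i j : ℕ} (hi : i < d)
    (hj : j < d) (l : ℕ →₀ M) (r : ℕ) :
    Finsupp.mapDomain (fun s => i + d * s) l (j + d * r) = if i = j then l r else 0 := by
  have hd : 0 < d := by omega
  split_ifs with hij
  · subst hij
    exact Finsupp.mapDomain_apply (fun s t h => by simpa [hd.ne'] using h) l r
  · refine Finsupp.mapDomain_of_notMem_range _ _ ?_
    rintro ⟨s, hs⟩
    have := congrArg (· % d) hs
    simp [Nat.add_mul_mod_self_left, Nat.mod_eq_of_lt hi, Nat.mod_eq_of_lt hj] at this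
    exact hij this

section Decimation

open Finset

variable {p : ℕ} [hp : Fact p.Prime] {F : (ℕ → ZMod p) → ℕ → ZMod p}

theorem linearCombination_mapDomain_repr {i : ℕ} (hi : i < p)
    (g : Submodule.span (ZMod p) (Set.range (kalMonomial p))) :
    Finsupp.linearCombination (ZMod p) (kalMonomial p)
        (Finsupp.mapDomain (fun r => i + p * r) (linearIndependent_kalMonomial.repr g)) =
      shiftMul i (g : (ℕ → ZMod p) → ZMod p) := by
  have hcomp : (kalMonomial p ∘ fun r => i + p * r) = shiftMul i ∘ kalMonomial p :=
    funext fun r => (shiftMul_kalMonomial hi r).symm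
  rw [Finsupp.linearCombination_mapDomain, hcomp, ← Finsupp.apply_linearCombination,
    LinearIndependent.linearCombination_repr]

theorem IsCausal.kalMonomial_add_mul_apply_appendSeq (hF : IsCausal F) {j : ℕ} (hj : j < p)
    (s : ℕ) (b : ZMod p) (y : ℕ → ZMod p) :
    kalMonomial p (j + p * s) (F (appendSeq [b] y)) =
      F (fun _ => b) 0 ^ j * kalMonomial p s (seqSection F [b] y) := by
  rw [kalMonomial_add_mul hj, hF.apply_appendSeq_singleton_zero]
  congr 2
  funext n
  simp [seqSection, add_comm]

theorem IsCausal.matDecimation_kalMatrix (hF : IsCausal F) {i j : ℕ} (hi : i < p)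
    (hj : j < p) :
    matDecimation p i j (kalMatrix F) = ∑ b : ZMod p,
      ((deltaPoly b).coeff i * F (fun _ => b) 0 ^ j) • kalMatrix (seqSection F [b]) := by
  funext r s
  let g (b : ZMod p) : Submodule.span (ZMod p) (Set.range (kalMonomial p)) :=
    ⟨_, (hF.isCausal_seqSection [b]).kalMonomial_comp_mem_span s⟩
  have hrepr :
      linearIndependent_kalMonomial.repr ⟨_, hF.kalMonomial_comp_mem_span (j + p * s)⟩ =
      ∑ i' ∈ range p, ∑ b : ZMod p, ((deltaPoly b).coeff i' * F (fun _ => b) 0 ^ j) •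
        Finsupp.mapDomain (fun r => i' + p * r) (linearIndependent_kalMonomial.repr (g b)) := by
    refine linearIndependent_kalMonomial.repr_eq ?_
    simp only [map_sum, map_smul]
    rw [eq_sum_shiftMul fun x => kalMonomial p (j + p * s) (F x)]
    refine sum_congr rfl fun i' hi' => sum_congr rfl fun b _ => ?_
    rw [linearCombination_mapDomain_repr (mem_range.1 hi'), mul_smul, ← map_smul]
    congr 2
    funext y
    exact (hF.kalMonomial_add_mul_apply_appendSeq hj s b y).symm
  simp only [matDecimation, hF.kalMatrix_apply, hrepr, Finsupp.finsetSum_apply,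
    Finsupp.smul_apply, Finset.sum_apply, Pi.smul_apply]
  rw [sum_eq_single_of_mem i (mem_range.2 hi) fun i' hi' hne => ?_]
  · simp [Finsupp.mapDomain_add_mul_apply hi hi, (hF.isCausal_seqSection _).kalMatrix_apply,
      g]
  · simp [Finsupp.mapDomain_add_mul_apply (mem_range.1 hi') hi, hne]

end Decimation

section Automatic

theorem Set.Finite.finite_span {R M : Type*} [Ring R] [Finite R] [AddCommGroup M] [Module R M]
    {s : Set M} (hs : s.Finite) : (Submodule.span R s : Set M).Finite := by
  have := Module.Finite.span_of_finite R hs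
  have : Finite (Submodule.span R s) := Module.finite_of_finite R
  exact Set.toFinite _

variable {R : Type*} [Ring R] {d : ℕ}

theorem matDecimation_mem_span {T : Set (ℕ → ℕ → R)}
    (hT : ∀ B ∈ T, ∀ i < d, ∀ j < d, matDecimation d i j B ∈ Submodule.span R T)
    {B : ℕ → ℕ → R} (hB : B ∈ Submodule.span R T) {i j : ℕ} (hi : i < d) (hj : j < d) :
    matDecimation d i j B ∈ Submodule.span R T := by
  let D : (ℕ → ℕ → R) →ₗ[R] ℕ → ℕ → R :=
    { toFun := matDecimation d i j, map_add' := fun _ _ => rfl, map_smul' := fun _ _ => rfl }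
  exact (Submodule.map_span_le D T _).2 (fun C hC => hT C hC i hi j hj) ⟨B, hB, rfl⟩

variable [Finite R]

theorem matIsAutomatic_of_mem_span {T : Set (ℕ → ℕ → R)} (hfin : T.Finite)
    (hT : ∀ B ∈ T, ∀ i < d, ∀ j < d, matDecimation d i j B ∈ Submodule.span R T)
    {A : ℕ → ℕ → R} (hA : A ∈ T) : MatIsAutomatic d A :=
  ⟨_, hfin.finite_span, Submodule.subset_span hA, fun _ hB _ hi _ hj =>
    matDecimation_mem_span hT hB hi hj⟩

theorem MatIsAutomatic.exists_submodule {A : ℕ → ℕ → R} (hA : MatIsAutomatic d A) :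
    ∃ V : Submodule R (ℕ → ℕ → R), (V : Set (ℕ → ℕ → R)).Finite ∧ A ∈ V ∧
      ∀ B ∈ V, ∀ i < d, ∀ j < d, matDecimation d i j B ∈ V := by
  obtain ⟨S, hfin, hAS, hS⟩ := hA
  exact ⟨_, hfin.finite_span, Submodule.subset_span hAS, fun _ hB _ hi _ hj =>
    matDecimation_mem_span (fun B hB i hi j hj => Submodule.subset_span (hS B hB i hi j hj))
      hB hi hj⟩

end Automatic

section SectionsAndDecimations

open Finset

variable {p : ℕ} [hp : Fact p.Prime] {F : (ℕ → ZMod p) → ℕ → ZMod p}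

theorem IsCausal.kalMatrix_seqSection_singleton (hF : IsCausal F) (c : ZMod p) :
    kalMatrix (seqSection F [c]) = ∑ i ∈ range p, c ^ i • matDecimation p i 0 (kalMatrix F) := by
  rw [sum_congr rfl fun i hi => by rw [hF.matDecimation_kalMatrix (mem_range.1 hi) hp.out.pos]]
  simp_rw [smul_sum, smul_smul, pow_zero, mul_one]
  rw [sum_comm]
  simp_rw [← sum_smul, mul_comm (c ^ _), sum_coeff_deltaPoly_mul_pow, ite_smul, one_smul,
    zero_smul]
  simp

theorem IsCausal.kalMatrix_seqSection_mem {V : Submodule (ZMod p) (ℕ → ℕ → ZMod p)}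
    (hV : ∀ B ∈ V, ∀ i < p, matDecimation p i 0 B ∈ V) (hF : IsCausal F)
    (hFV : kalMatrix F ∈ V) (v : List (ZMod p)) : kalMatrix (seqSection F v) ∈ V := by
  induction v generalizing F with
  | nil => rwa [seqSection_nil]
  | cons a v ih =>
    rw [← List.singleton_append, ← seqSection_append]
    refine ih (hF.isCausal_seqSection _) ?_
    rw [hF.kalMatrix_seqSection_singleton]
    exact V.sum_mem fun i hi => V.smul_mem _ (hV _ hFV i (mem_range.1 hi))

theorem kalMatrix_injOn : Set.InjOn (kalMatrix (p := p)) {F | IsCausal F} :=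
  fun _ hF _ hG h => (hF.isKalMatrix_iff.2 rfl).eq_of_isKalMatrix (hG.isKalMatrix_iff.2 h)

theorem IsCausal.matIsAutomatic_kalMatrix_iff (hF : IsCausal F) :
    MatIsAutomatic p (kalMatrix F) ↔ (Set.range (seqSection F)).Finite := by
  constructor
  · intro hA
    obtain ⟨V, hVfin, hFV, hV⟩ := hA.exists_submodule
    refine Set.Finite.of_finite_image (hVfin.subset ?_) (kalMatrix_injOn.mono ?_)
    · rintro _ ⟨_, ⟨v, rfl⟩, rfl⟩
      exact hF.kalMatrix_seqSection_mem (fun B hB i hi => hV B hB i hi 0 hp.out.pos) hFV v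
    · rintro _ ⟨v, rfl⟩
      exact hF.isCausal_seqSection v
  · intro hfin
    refine matIsAutomatic_of_mem_span (hfin.image kalMatrix) ?_ ⟨F, ⟨[], seqSection_nil F⟩, rfl⟩
    rintro _ ⟨_, ⟨v, rfl⟩, rfl⟩ i hi j hj
    rw [(hF.isCausal_seqSection v).matDecimation_kalMatrix hi hj]
    refine Submodule.sum_mem _ fun b _ => Submodule.smul_mem _ _ (Submodule.subset_span ?_)
    exact ⟨_, ⟨v ++ [b], (seqSection_append F v [b]).symm⟩, rfl⟩

end SectionsAndDecimations

theorem automatic_iff_finiteState_general (p : ℕ) (hp : p.Prime)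
    (g : Equiv.Perm (List (ZMod p)))
    (hlen : ∀ v : List (ZMod p), (g v).length = v.length)
    (hpre : ∀ v w : List (ZMod p), v <+: w → g v <+: g w)
    (gbar : Equiv.Perm (ℕ → ZMod p))
    (hbar : ∀ (x : ℕ → ZMod p) (n : ℕ),
      g (List.ofFn fun i : Fin n => x (i : ℕ)) =
        List.ofFn fun i : Fin n => gbar x (i : ℕ)) :
    (∃! A : ℕ → ℕ → ZMod p, ColumnFinite A ∧
        ∀ (n : ℕ) (x : ℕ → ZMod p),
          kalMonomial p n (gbar.symm x) = ∑ᶠ m : ℕ, A m n * kalMonomial p m x) ∧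
    ∀ A : ℕ → ℕ → ZMod p,
      (ColumnFinite A ∧
        ∀ (n : ℕ) (x : ℕ → ZMod p),
          kalMonomial p n (gbar.symm x) = ∑ᶠ m : ℕ, A m n * kalMonomial p m x) →
      (MatIsAutomatic p A ↔ FiniteState (⇑g)) := by
  have : Fact p.Prime := ⟨hp⟩
  have hF : IsBoundaryMap ⇑g.symm ⇑gbar.symm := IsBoundaryMap.symm hbar
  have hcausal := hF.isCausal
  refine ⟨⟨kalMatrix gbar.symm, hcausal.isKalMatrix_iff.2 rfl,
    fun A hA => hcausal.isKalMatrix_iff.1 hA⟩, fun A hA => ?_⟩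
  rw [hcausal.isKalMatrix_iff.1 hA, hcausal.matIsAutomatic_kalMatrix_iff,
    ← hF.finite_range_treeSection_iff]
  exact IsTreeAutomorphism.finiteState_symm_iff ⟨hlen, hpre⟩

/-- let `g` be an automorphism of the rooted tree over `ZMod p` (a
permutation of finite words preserving length and prefixes) and `ḡ` the induced
homeomorphism of `(ZMod p)^ℕ`. There is a unique column-finite matrix `A_g` with
`e_n ∘ ḡ⁻¹ = Σ_m A_g(m,n) e_m` for every `n`, and any such matrix is `p`-automatic
if and only if `g` is finite-state. -/
theorem automatic_iff_finiteState (p : ℕ) (hp : p.Prime) [NeZero p]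
    (g : Equiv.Perm (List (ZMod p)))
    (hlen : ∀ v : List (ZMod p), (g v).length = v.length)
    (hpre : ∀ v w : List (ZMod p), v <+: w → g v <+: g w)
    (gbar : Equiv.Perm (ℕ → ZMod p))
    (hbar : ∀ (x : ℕ → ZMod p) (n : ℕ),
      g (List.ofFn fun i : Fin n => x (i : ℕ)) =
        List.ofFn fun i : Fin n => gbar x (i : ℕ)) :
    (∃! A : ℕ → ℕ → ZMod p, ColumnFinite A ∧
        ∀ (n : ℕ) (x : ℕ → ZMod p),
          kalMonomial p n (gbar.symm x) = ∑ᶠ m : ℕ, A m n * kalMonomial p m x) ∧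
    ∀ A : ℕ → ℕ → ZMod p,
      (ColumnFinite A ∧
        ∀ (n : ℕ) (x : ℕ → ZMod p),
          kalMonomial p n (gbar.symm x) = ∑ᶠ m : ℕ, A m n * kalMonomial p m x) →
      (MatIsAutomatic p A ↔ FiniteState (⇑g)) :=
  automatic_iff_finiteState_general p hp g hlen hpre gbar hbar
end
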